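/- arXiv:1708.00951 — 2 statements merged into one kernel-verified Lean document; each statement's English description precedes it below -/
import Mathlib

section
/- Let $\delta > 1$, $k \ge 1$ an integer, $l \ge 0$, and $h : S \to [0,\infty)$ a function with maps $f_1,\dots,f_k : S \to S$. Define $\hat{\mathbf{h}}(P) = \limsup_{n\to\infty} \frac{1}{n^l k^n \delta^n} \sum_{f\in\mathcal{F}_n} h(f(P))$ and the arithmetic degree $\alpha(P) = \frac{1}{k}\limsup_{n\to\infty} \big(\sum_{f\in\mathcal{F}_n} \max(1, h(f(P)))\big)^{1/n}$. If $\hat{\mathbf{h}}(P) > 0$, then $\alpha(P) \ge \delta$. -/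
set_option maxHeartbeats 1000000


open Filter

/-- Composition `f_{w 0} ∘ f_{w 1} ∘ ⋯ ∘ f_{w (n-1)}` applied to a point. -/
def wordComp {S : Type*} {k : ℕ} (f : Fin k → S → S) : (n : ℕ) → (Fin n → Fin k) → S → S
  | 0, _, P => P
  | n + 1, w, P => f (w 0) (wordComp f n (fun i => w i.succ) P)

/-- Proposition 2.3(d): if the canonical height
`ĥ(P) = limsup_n (∑_{f ∈ 𝓕_n} h(f(P))) / (n^l k^n δ^n)` is positive, then the
arithmetic degree `α(P) = (1/k) limsup_n (∑_{f ∈ 𝓕_n} max(1, h(f(P))))^{1/n}`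
satisfies `α(P) ≥ δ`. -/
theorem arithDegree_ge_of_boldHeight_pos {S : Type*} {k : ℕ} (hk : 1 ≤ k)
    (δ l : ℝ) (hδ : 1 < δ) (hl : 0 ≤ l)
    (f : Fin k → S → S) (h : S → ℝ) (hh : ∀ x, 0 ≤ h x) (P : S)
    (hpos : 0 < Filter.limsup
      (fun n : ℕ => (∑ w : Fin n → Fin k, h (wordComp f n w P)) /
        ((n : ℝ) ^ l * (k : ℝ) ^ n * δ ^ n)) atTop) :
    δ ≤ (1 / (k : ℝ)) * Filter.limsup
      (fun n : ℕ => (∑ w : Fin n → Fin k, max 1 (h (wordComp f n w P))) ^ ((1 : ℝ) / n))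
      atTop := by
  have hk1 : (1:ℝ) ≤ (k:ℝ) := by exact_mod_cast hk
  have hk0 : (0:ℝ) < (k:ℝ) := by linarith
  have hδ0 : (0:ℝ) < δ := by linarith
  have hkδ1 : (1:ℝ) < (k:ℝ) * δ := by nlinarith
  have hkδ0 : (0:ℝ) < (k:ℝ) * δ := by linarith
  set a : ℕ → ℝ := fun n => ∑ w : Fin n → Fin k, h (wordComp f n w P) with ha
  set b : ℕ → ℝ := fun n => ∑ w : Fin n → Fin k, max 1 (h (wordComp f n w P)) with hb
  set u : ℕ → ℝ := fun n => a n / ((n : ℝ) ^ l * (k : ℝ) ^ n * δ ^ n) with hu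
  have ha_nonneg : ∀ n, 0 ≤ a n := fun n =>
    Finset.sum_nonneg fun w _ => hh _
  have hab : ∀ n, a n ≤ b n := fun n =>
    Finset.sum_le_sum fun w _ => le_max_right _ _
  have hcard : ∀ n, Fintype.card (Fin n → Fin k) = k ^ n := by
    intro n; simp [Fintype.card_fun]
  have hb_ub : ∀ n, b n ≤ (k:ℝ) ^ n + a n := by
    intro n
    have : b n ≤ ∑ w : Fin n → Fin k, (1 + h (wordComp f n w P)) :=
      Finset.sum_le_sum fun w _ => max_le (by linarith [hh (wordComp f n w P)])
        (by linarith [hh (wordComp f n w P)])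
    calc b n ≤ ∑ w : Fin n → Fin k, (1 + h (wordComp f n w P)) := this
      _ = (k:ℝ) ^ n + a n := by
          rw [Finset.sum_add_distrib, Finset.sum_const, Finset.card_univ, hcard n]
          simp
          rfl
  -- Step 2: boundedness of u from positivity of its limsup
  obtain ⟨M, hM⟩ : ∃ M, ∀ᶠ n in atTop, u n ≤ M := by
    by_contra hc
    rw [not_exists] at hc
    have hemp : {x : ℝ | ∀ᶠ n in atTop, u n ≤ x} = ∅ :=
      Set.eq_empty_iff_forall_notMem.mpr hc
    rw [Filter.limsup_eq, hemp, Real.sInf_empty] at hpos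
    exact lt_irrefl 0 hpos
  -- Step 3: frequent lower bound
  set L := limsup u atTop with hL
  have hLpos : 0 < L := hpos
  set c : ℝ := min (L / 2) (1 / 2) with hc
  have hc0 : 0 < c := lt_min (by linarith) (by norm_num)
  have hc1 : c ≤ 1 := le_trans (min_le_right _ _) (by norm_num)
  have hcL : c < L := lt_of_le_of_lt (min_le_left _ _) (by linarith)
  have hcob : IsCoboundedUnder (· ≤ ·) atTop u :=
    isCoboundedUnder_le_of_le atTop (x := 0) fun n => by
      have : (0:ℝ) ≤ ((n : ℝ) ^ l * (k : ℝ) ^ n * δ ^ n) := by positivity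
      exact div_nonneg (ha_nonneg n) this
  have hfreq : ∃ᶠ n in atTop, c < u n := frequently_lt_of_lt_limsup hcob hcL
  -- Step 4: frequent lower bound for b n ^ (1/n)
  have hfreq2 : ∃ᶠ n : ℕ in atTop,
      ((k:ℝ) * δ) * c ^ ((1:ℝ)/n) ≤ b n ^ ((1:ℝ)/n) := by
    refine (hfreq.and_eventually (eventually_ge_atTop 1)).mono ?_
    rintro n ⟨hcu, hn1⟩
    have hn0 : (0:ℝ) < n := by exact_mod_cast hn1
    have hn1' : (1:ℝ) ≤ n := by exact_mod_cast hn1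
    have hnl1 : (1:ℝ) ≤ (n:ℝ) ^ l := Real.one_le_rpow hn1' hl
    have hD : (0:ℝ) < (n : ℝ) ^ l * (k : ℝ) ^ n * δ ^ n := by positivity
    have h1 : c * ((n : ℝ) ^ l * (k : ℝ) ^ n * δ ^ n) < a n := (lt_div_iff₀ hD).mp hcu
    have key : c * ((k:ℝ) * δ) ^ n ≤ b n := by
      have hkd : ((k:ℝ) * δ) ^ n = (k:ℝ) ^ n * δ ^ n := mul_pow _ _ _
      have hpos' : (0:ℝ) < (k:ℝ) ^ n * δ ^ n := by positivity
      have h2 : c * ((k:ℝ) ^ n * δ ^ n) ≤ c * ((n : ℝ) ^ l * ((k:ℝ) ^ n * δ ^ n)) :=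
        mul_le_mul_of_nonneg_left (le_mul_of_one_le_left hpos'.le hnl1) hc0.le
      calc c * ((k:ℝ) * δ) ^ n = c * ((k:ℝ) ^ n * δ ^ n) := by rw [hkd]
        _ ≤ c * ((n : ℝ) ^ l * ((k:ℝ) ^ n * δ ^ n)) := h2
        _ = c * ((n : ℝ) ^ l * (k:ℝ) ^ n * δ ^ n) := by ring
        _ ≤ a n := h1.le
        _ ≤ b n := hab n
    have hmono : (c * ((k:ℝ) * δ) ^ n) ^ ((1:ℝ)/n) ≤ b n ^ ((1:ℝ)/n) :=
      Real.rpow_le_rpow (by positivity) key (by positivity)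
    have hsplit : (c * ((k:ℝ) * δ) ^ n) ^ ((1:ℝ)/n)
        = c ^ ((1:ℝ)/n) * (((k:ℝ) * δ) ^ n) ^ ((1:ℝ)/n) :=
      Real.mul_rpow hc0.le (by positivity)
    have hpow : (((k:ℝ) * δ) ^ n) ^ ((1:ℝ)/n) = (k:ℝ) * δ := by
      rw [← Real.rpow_natCast ((k:ℝ) * δ) n, ← Real.rpow_mul hkδ0.le]
      rw [mul_one_div, div_self (by positivity : ((n:ℝ)) ≠ 0), Real.rpow_one]
    calc ((k:ℝ) * δ) * c ^ ((1:ℝ)/n) = (c * ((k:ℝ) * δ) ^ n) ^ ((1:ℝ)/n) := by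
          rw [hsplit, hpow]; ring
      _ ≤ b n ^ ((1:ℝ)/n) := hmono
  -- Step 5: boundedness of b n ^ (1/n)
  set M' : ℝ := max M 0 with hM'
  have hM'0 : 0 ≤ M' := le_max_right _ _
  have hbdd : IsBoundedUnder (· ≤ ·) atTop (fun n => b n ^ ((1:ℝ)/n)) := by
    refine ⟨(1 + M') * Real.exp l * ((k:ℝ) * δ), ?_⟩
    rw [eventually_map]
    filter_upwards [hM, eventually_ge_atTop 1] with n hMn hn1
    have hn0 : (0:ℝ) < n := by exact_mod_cast hn1
    have hn1' : (1:ℝ) ≤ n := by exact_mod_cast hn1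
    have hnl1 : (1:ℝ) ≤ (n:ℝ) ^ l := Real.one_le_rpow hn1' hl
    have hD : (0:ℝ) < (n : ℝ) ^ l * (k : ℝ) ^ n * δ ^ n := by positivity
    have han : a n ≤ M' * ((n : ℝ) ^ l * (k : ℝ) ^ n * δ ^ n) := by
      have := (div_le_iff₀ hD).mp hMn
      have hMM' : M ≤ M' := le_max_left _ _
      nlinarith
    have hkn : (k:ℝ) ^ n ≤ (n:ℝ) ^ l * ((k:ℝ) * δ) ^ n := by
      have hδn : (1:ℝ) ≤ δ ^ n := one_le_pow₀ hδ.le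
      have : (k:ℝ) ^ n ≤ (k:ℝ) ^ n * δ ^ n := by nlinarith [pow_pos hk0 n]
      calc (k:ℝ) ^ n ≤ (k:ℝ) ^ n * δ ^ n := this
        _ = ((k:ℝ) * δ) ^ n := (mul_pow _ _ _).symm
        _ ≤ (n:ℝ) ^ l * ((k:ℝ) * δ) ^ n := by nlinarith [pow_pos hkδ0 n]
    have hbn : b n ≤ (1 + M') * ((n:ℝ) ^ l * ((k:ℝ) * δ) ^ n) := by
      have := hb_ub n
      have h3 : a n ≤ M' * ((n:ℝ) ^ l * ((k:ℝ) * δ) ^ n) := by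
        calc a n ≤ M' * ((n : ℝ) ^ l * (k : ℝ) ^ n * δ ^ n) := han
          _ = M' * ((n:ℝ) ^ l * ((k:ℝ) * δ) ^ n) := by rw [mul_pow]; ring
      nlinarith
    have hstep : b n ^ ((1:ℝ)/n)
        ≤ ((1 + M') * ((n:ℝ) ^ l * ((k:ℝ) * δ) ^ n)) ^ ((1:ℝ)/n) :=
      Real.rpow_le_rpow (by
        have : (1:ℝ) ≤ b n := by
          have := hab n
          calc (1:ℝ) ≤ (k:ℝ) ^ n := one_le_pow₀ hk1
            _ = ∑ w : Fin n → Fin k, (1:ℝ) := by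
                rw [Finset.sum_const, Finset.card_univ, hcard n]; push_cast; ring
            _ ≤ b n := Finset.sum_le_sum fun w _ => le_max_left _ _
        linarith) hbn (by positivity)
    have hsplit : ((1 + M') * ((n:ℝ) ^ l * ((k:ℝ) * δ) ^ n)) ^ ((1:ℝ)/n)
        = (1 + M') ^ ((1:ℝ)/n) * (((n:ℝ) ^ l) ^ ((1:ℝ)/n) * ((((k:ℝ) * δ) ^ n) ^ ((1:ℝ)/n))) := by
      rw [Real.mul_rpow (by linarith) (by positivity),
        Real.mul_rpow (by positivity) (by positivity)]
    have hpow : (((k:ℝ) * δ) ^ n) ^ ((1:ℝ)/n) = (k:ℝ) * δ := by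
      rw [← Real.rpow_natCast ((k:ℝ) * δ) n, ← Real.rpow_mul hkδ0.le]
      rw [mul_one_div, div_self (by positivity : ((n:ℝ)) ≠ 0), Real.rpow_one]
    have h1M : (1 + M') ^ ((1:ℝ)/n) ≤ 1 + M' := by
      have h1 : (1:ℝ)/n ≤ 1 := by
        rw [div_le_one hn0]; exact hn1'
      calc (1 + M') ^ ((1:ℝ)/n) ≤ (1 + M') ^ (1:ℝ) :=
            Real.rpow_le_rpow_of_exponent_le (by linarith) h1
        _ = 1 + M' := Real.rpow_one _
    have hnlexp : ((n:ℝ) ^ l) ^ ((1:ℝ)/n) ≤ Real.exp l := by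
      rw [← Real.rpow_mul hn0.le]
      rw [Real.rpow_def_of_pos hn0]
      apply Real.exp_le_exp.mpr
      have hlog0 : 0 ≤ Real.log n := Real.log_nonneg hn1'
      have hlogn : Real.log n ≤ n := by
        have := Real.log_le_sub_one_of_pos hn0
        linarith
      have : Real.log n * (l * (1/n)) = l * (Real.log n / n) := by ring
      rw [this]
      have hq : Real.log n / n ≤ 1 := by
        rw [div_le_one hn0]; exact hlogn
      have hq0 : 0 ≤ Real.log n / n := div_nonneg hlog0 hn0.le
      nlinarith
    calc b n ^ ((1:ℝ)/n) ≤ ((1 + M') * ((n:ℝ) ^ l * ((k:ℝ) * δ) ^ n)) ^ ((1:ℝ)/n) := hstep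
      _ = (1 + M') ^ ((1:ℝ)/n) * (((n:ℝ) ^ l) ^ ((1:ℝ)/n) * ((((k:ℝ) * δ) ^ n) ^ ((1:ℝ)/n))) :=
          hsplit
      _ ≤ (1 + M') * (Real.exp l * ((k:ℝ) * δ)) := by
          rw [hpow]
          exact mul_le_mul h1M (mul_le_mul_of_nonneg_right hnlexp hkδ0.le)
            (by positivity) (by linarith)
      _ = (1 + M') * Real.exp l * ((k:ℝ) * δ) := by ring
  -- Step 6: conclude
  have hmain : (k:ℝ) * δ ≤ limsup (fun n => b n ^ ((1:ℝ)/n)) atTop := by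
    refine le_of_forall_pos_le_add ?_
    intro ε hε
    have h1 : Tendsto (fun n : ℕ => c ^ ((1:ℝ)/n)) atTop (nhds 1) := by
      have hcont : ContinuousAt (fun x : ℝ => c ^ x) 0 :=
        Real.continuousAt_const_rpow hc0.ne'
      have := hcont.tendsto.comp tendsto_one_div_atTop_nhds_zero_nat
      simpa [Real.rpow_zero, Function.comp_def] using this
    have htend : Tendsto (fun n : ℕ => ((k:ℝ) * δ) * c ^ ((1:ℝ)/n)) atTop
        (nhds ((k:ℝ) * δ)) := by
      simpa using h1.const_mul ((k:ℝ) * δ)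
    have hev : ∀ᶠ n : ℕ in atTop, (k:ℝ) * δ - ε < ((k:ℝ) * δ) * c ^ ((1:ℝ)/n) :=
      htend.eventually (eventually_gt_nhds (by linarith))
    have hfr : ∃ᶠ n : ℕ in atTop, (k:ℝ) * δ - ε ≤ b n ^ ((1:ℝ)/n) := by
      refine (hfreq2.and_eventually hev).mono ?_
      rintro n ⟨h1', h2'⟩
      linarith
    have := le_limsup_of_frequently_le hfr hbdd
    linarith
  calc δ = (1 / (k:ℝ)) * ((k:ℝ) * δ) := by field_simp
    _ ≤ (1 / (k:ℝ)) * limsup (fun n => b n ^ ((1:ℝ)/n)) atTop := by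
        apply mul_le_mul_of_nonneg_left hmain (by positivity)
end

section
/- Let $\delta > 1$, $k \ge 1$, $l \ge 0$, and $h : S \to [0,\infty)$ with maps $f_1,\dots,f_k : S \to S$. Define $\hat{h}(P) = \limsup_{n\to\infty} \frac{1}{n^l \delta^n} \sum_{f\in\mathcal{F}_n} h(f(P))$ and $\alpha(P) = \frac{1}{k}\limsup_{n\to\infty} (\sum_{f\in\mathcal{F}_n} \max(1,h(f(P))))^{1/n}$. If $\hat{h}(P) > 0$, then $\alpha(P) \ge \delta/k$. -/
open Filter

/-- Proposition 2.6(d): if the canonical height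
`ĥ(P) = limsup_n (∑_{f ∈ 𝓕_n} h(f(P))) / (n^l δ^n)` is positive, then the
arithmetic degree `α(P) = (1/k) limsup_n (∑_{f ∈ 𝓕_n} max(1, h(f(P))))^{1/n}`
satisfies `α(P) ≥ δ/k`. -/
theorem arithDegree_ge_of_height_pos {S : Type*} {k : ℕ} (hk : 1 ≤ k)
    (δ l : ℝ) (hδ : 1 < δ) (hl : 0 ≤ l)
    (f : Fin k → S → S) (h : S → ℝ) (hh : ∀ x, 0 ≤ h x) (P : S)
    (hpos : 0 < Filter.limsup
      (fun n : ℕ => (∑ w : Fin n → Fin k, h (wordComp f n w P)) /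
        ((n : ℝ) ^ l * δ ^ n)) atTop) :
    δ / (k : ℝ) ≤ (1 / (k : ℝ)) * Filter.limsup
      (fun n : ℕ => (∑ w : Fin n → Fin k, max 1 (h (wordComp f n w P))) ^ ((1 : ℝ) / n))
      atTop := by
  have hk0 : (0:ℝ) < k := by exact_mod_cast hk
  set a : ℕ → ℝ := fun n => ∑ w : Fin n → Fin k, h (wordComp f n w P) with ha
  set b : ℕ → ℝ := fun n => ∑ w : Fin n → Fin k, max 1 (h (wordComp f n w P)) with hb
  set c : ℕ → ℝ := fun n => a n / ((n : ℝ) ^ l * δ ^ n) with hc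
  set g : ℕ → ℝ := fun n => b n ^ ((1:ℝ)/n) with hg
  have ha0 : ∀ n, 0 ≤ a n := fun n => Finset.sum_nonneg fun w _ => hh _
  have hc0 : ∀ n, 0 ≤ c n := fun n => by
    apply div_nonneg (ha0 n)
    positivity
  have hab : ∀ n, a n ≤ b n := fun n =>
    Finset.sum_le_sum fun w _ => le_max_right _ _
  have hb0 : ∀ n, 0 ≤ b n := fun n => le_trans (ha0 n) (hab n)
  have hcardpow : ∀ n : ℕ, ((Fintype.card (Fin n → Fin k) : ℝ)) = (k:ℝ)^n := by
    intro n; rw [Fintype.card_fun]; push_cast; simp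
  have hbk : ∀ n, b n ≤ a n + (k:ℝ)^n := by
    intro n
    have : b n ≤ ∑ w : Fin n → Fin k, (h (wordComp f n w P) + 1) :=
      Finset.sum_le_sum fun w _ => max_le (by linarith [hh (wordComp f n w P)]) (by linarith)
    rw [Finset.sum_add_distrib, Finset.sum_const, Finset.card_univ] at this
    calc b n ≤ a n + (Fintype.card (Fin n → Fin k)) • (1:ℝ) := this
      _ = a n + (k:ℝ)^n := by rw [nsmul_eq_mul, mul_one, hcardpow]
  -- boundedness of c
  have hcb : IsBoundedUnder (· ≤ ·) atTop c := by
    by_contra hcon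
    have hempty : {x : ℝ | ∀ᶠ n in atTop, c n ≤ x} = ∅ := by
      ext x
      simp only [Set.mem_setOf_eq, Set.mem_empty_iff_false, iff_false]
      intro hx
      exact hcon ⟨x, by rwa [eventually_map]⟩
    rw [Filter.limsup, Filter.limsSup] at hpos
    have : {x : ℝ | ∀ᶠ n in Filter.map c atTop, n ≤ x} = ∅ := by
      rw [← hempty]; ext x; simp [eventually_map]
    rw [this, Real.sInf_empty] at hpos
    exact lt_irrefl _ hpos
  obtain ⟨M, hM⟩ := hcb
  rw [eventually_map] at hM
  -- upper bound for g
  set M1 : ℝ := max M 1 with hM1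
  have hM1one : (1:ℝ) ≤ M1 := le_max_right _ _
  set B0 : ℝ := (2:ℝ)^l * δ * k with hB0
  have h2l : (1:ℝ) ≤ (2:ℝ)^l := Real.one_le_rpow (by norm_num) hl
  have hkcast : (1:ℝ) ≤ (k:ℝ) := by exact_mod_cast hk
  have hB0one : (1:ℝ) ≤ B0 := by
    rw [hB0]
    calc (1:ℝ) = 1 * 1 * 1 := by ring
      _ ≤ (2:ℝ)^l * δ * k := by
          gcongr <;> first | positivity | linarith
  have hgbound : ∀ᶠ n in atTop, g n ≤ (M1 + 1) * B0 := by
    filter_upwards [hM, eventually_ge_atTop 1] with n hMn hn1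
    have hn0 : (0:ℝ) < n := by exact_mod_cast hn1
    have hden : (0:ℝ) < (n:ℝ)^l * δ^n := by positivity
    have han : a n ≤ M * ((n:ℝ)^l * δ^n) := by
      rw [hc] at hMn
      exact (div_le_iff₀ hden).mp hMn
    have hnl : (n:ℝ)^l ≤ ((2:ℝ)^l)^n := by
      have h1 : (n:ℝ) ≤ (2:ℝ)^n := by
        exact_mod_cast (Nat.lt_two_pow_self (n := n)).le
      calc (n:ℝ)^l ≤ ((2:ℝ)^n)^l := Real.rpow_le_rpow hn0.le h1 hl
        _ = ((2:ℝ)^l)^n := by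
            rw [← Real.rpow_natCast (2:ℝ) n, ← Real.rpow_mul (by norm_num),
              mul_comm, Real.rpow_mul (by norm_num), Real.rpow_natCast]
    have hbn : b n ≤ (M1 + 1) * B0^n := by
      have h1 : a n ≤ M1 * (((2:ℝ)^l)^n * δ^n) := by
        have : M * ((n:ℝ)^l * δ^n) ≤ M1 * (((2:ℝ)^l)^n * δ^n) := by
          have hd : (0:ℝ) < δ^n := by positivity
          have := mul_le_mul_of_nonneg_left hnl (le_of_lt hd)
          nlinarith [le_max_left M 1, hden, hd, Real.rpow_nonneg (le_of_lt hn0) l]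
        linarith
      have h2 : ((2:ℝ)^l)^n * δ^n ≤ B0^n := by
        rw [hB0, ← mul_pow]
        apply pow_le_pow_left₀ (by positivity)
        nlinarith [h2l, hδ.le]
      have h3 : (k:ℝ)^n ≤ B0^n := by
        apply pow_le_pow_left₀ (by positivity)
        rw [hB0]
        calc (k:ℝ) = 1 * 1 * k := by ring
          _ ≤ (2:ℝ)^l * δ * k := by gcongr <;> first | positivity | linarith
      have h5 := hbk n
      have h4 := mul_le_mul_of_nonneg_left h2 (le_trans zero_le_one hM1one)
      have h6 : a n ≤ M1 * B0^n := le_trans h1 h4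
      linarith
    have hinv : (0:ℝ) ≤ 1/(n:ℝ) := by positivity
    calc g n ≤ ((M1 + 1) * B0^n) ^ ((1:ℝ)/n) :=
          Real.rpow_le_rpow (hb0 n) hbn hinv
      _ = (M1 + 1) ^ ((1:ℝ)/n) * (B0^n) ^ ((1:ℝ)/n) := by
          rw [Real.mul_rpow (by linarith) (by positivity)]
      _ = (M1 + 1) ^ ((1:ℝ)/n) * B0 := by
          rw [← Real.rpow_natCast B0 n, ← Real.rpow_mul (by linarith),
            mul_one_div, div_self (by positivity : (n:ℝ) ≠ 0), Real.rpow_one]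
      _ ≤ (M1 + 1) * B0 := by
          apply mul_le_mul_of_nonneg_right _ (by linarith)
          calc (M1 + 1) ^ ((1:ℝ)/n) ≤ (M1 + 1) ^ (1:ℝ) :=
                Real.rpow_le_rpow_of_exponent_le (by linarith)
                  (by rw [div_le_one hn0]; exact_mod_cast hn1)
            _ = M1 + 1 := Real.rpow_one _
  have hgb : IsBoundedUnder (· ≤ ·) atTop g :=
    ⟨(M1 + 1) * B0, by rwa [eventually_map]⟩
  -- lower bound
  set L : ℝ := Filter.limsup c atTop with hL
  have hLpos : 0 < L := hpos
  have hcobdd : IsCoboundedUnder (· ≤ ·) atTop c :=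
    isCoboundedUnder_le_of_eventually_le atTop (Eventually.of_forall hc0)
  have hfreq : ∃ᶠ n in atTop, L/2 < c n :=
    frequently_lt_of_lt_limsup hcobdd (by linarith)
  have hfreq2 : ∃ᶠ n : ℕ in atTop, (L/2) ^ ((1:ℝ)/(n:ℝ)) * δ ≤ g n := by
    have := hfreq.and_eventually (eventually_ge_atTop 1)
    apply this.mono
    rintro n ⟨hcn, hn1⟩
    have hn0 : (0:ℝ) < n := by exact_mod_cast hn1
    have hden : (0:ℝ) < (n:ℝ)^l * δ^n := by positivity
    have han : (L/2) * ((n:ℝ)^l * δ^n) ≤ a n := by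
      have hcn' : L/2 < a n / ((n:ℝ)^l * δ^n) := hcn
      exact ((lt_div_iff₀ hden).mp hcn').le
    have hnl : (1:ℝ) ≤ (n:ℝ)^l := Real.one_le_rpow (by exact_mod_cast hn1) hl
    have hbn : (L/2) * δ^n ≤ b n := by
      have hd : (0:ℝ) < δ^n := by positivity
      have : (L/2) * δ^n ≤ (L/2) * ((n:ℝ)^l * δ^n) :=
        mul_le_mul_of_nonneg_left (le_mul_of_one_le_left hd.le hnl) (by linarith)
      linarith [hab n]
    have hinv : (0:ℝ) ≤ 1/(n:ℝ) := by positivity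
    calc (L/2) ^ ((1:ℝ)/n) * δ
        = ((L/2) * δ^n) ^ ((1:ℝ)/n) := by
          rw [Real.mul_rpow (by linarith) (by positivity),
            ← Real.rpow_natCast δ n, ← Real.rpow_mul (by linarith),
            mul_one_div, div_self (by positivity : (n:ℝ) ≠ 0), Real.rpow_one]
      _ ≤ g n := Real.rpow_le_rpow (by positivity) hbn hinv
  have hten : Tendsto (fun n : ℕ => (L/2) ^ ((1:ℝ)/n) * δ) atTop (nhds δ) := by
    have heq : (fun n : ℕ => (L/2) ^ ((1:ℝ)/n)) =
        fun n : ℕ => Real.exp (Real.log (L/2) * (1/n)) := by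
      funext n
      rw [Real.rpow_def_of_pos (by linarith)]
    have h1 : Tendsto (fun n : ℕ => Real.log (L/2) * (1/n)) atTop (nhds 0) := by
      have := tendsto_one_div_atTop_nhds_zero_nat.const_mul (Real.log (L/2))
      simpa using this
    have h2 : Tendsto (fun n : ℕ => (L/2) ^ ((1:ℝ)/n)) atTop (nhds 1) := by
      rw [heq]
      have := (Real.continuous_exp.tendsto 0).comp h1
      simpa [Function.comp_def] using this
    have := h2.mul_const δ
    simpa using this
  have hdel : δ ≤ Filter.limsup g atTop := by
    apply le_of_forall_pos_le_add
    intro ε hε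
    have hev : ∀ᶠ n : ℕ in atTop, δ - ε < (L/2) ^ ((1:ℝ)/(n:ℝ)) * δ :=
      hten.eventually (eventually_gt_nhds (by linarith))
    have hfr : ∃ᶠ n in atTop, δ - ε ≤ g n := by
      apply (hfreq2.and_eventually hev).mono
      rintro n ⟨h1, h2⟩
      linarith
    have := le_limsup_of_frequently_le hfr hgb
    linarith
  calc δ / (k:ℝ) = (1/(k:ℝ)) * δ := by ring
    _ ≤ (1/(k:ℝ)) * Filter.limsup g atTop := by
        apply mul_le_mul_of_nonneg_left hdel
        positivity
end
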